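/- Let β, t ≥ 0 and let Ψ_{β,t} be the smoothed truncated exponential function. For all real w and u, the derivative Ψ'_{β,t} satisfies |Ψ'_{β,t}(w+u) − Ψ'_{β,t}(w)| ≤ |u| t² e^{t|u|} Ψ_{β,t}(w). -/
import Mathlib


noncomputable def Psi (β t w : ℝ) : ℝ :=
  if w ≤ β then Real.exp (t * w) + 1
  else 2 * Real.exp (t * β) - Real.exp (t * (2 * β - w)) + 1

noncomputable def PsiD (β t w : ℝ) : ℝ :=
  if w ≤ β then t * Real.exp (t * w) else t * Real.exp (t * (2 * β - w))

lemma abs_exp_sub_one_le (d : ℝ) : |Real.exp d - 1| ≤ |d| * Real.exp |d| := by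
  rcases le_or_gt 0 d with h | h
  · rw [abs_of_nonneg h, abs_of_nonneg (by linarith [Real.one_le_exp h] : (0:ℝ) ≤ Real.exp d - 1)]
    have h1 : 1 - d ≤ Real.exp (-d) := by linarith [Real.add_one_le_exp (-d)]
    have h2 : Real.exp (-d) * Real.exp d = 1 := by
      rw [← Real.exp_add]; simp
    nlinarith [Real.exp_pos d]
  · have habs : |d| = -d := abs_of_neg h
    have h1 : Real.exp d ≤ 1 := Real.exp_le_one_iff.mpr h.le
    rw [abs_of_nonpos (by linarith), habs]
    have h2 : d + 1 ≤ Real.exp d := Real.add_one_le_exp d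
    have h3 : (1:ℝ) ≤ Real.exp (-d) := Real.one_le_exp (by linarith)
    nlinarith

lemma abs_exp_sub_exp_le (a b : ℝ) :
    |Real.exp a - Real.exp b| ≤ Real.exp b * (|a - b| * Real.exp |a - b|) := by
  have h : Real.exp a - Real.exp b = Real.exp b * (Real.exp (a - b) - 1) := by
    rw [mul_sub, mul_one, ← Real.exp_add]; ring_nf
  rw [h, abs_mul, abs_of_pos (Real.exp_pos b)]
  exact mul_le_mul_of_nonneg_left (abs_exp_sub_one_le _) (Real.exp_pos b).le

theorem PsiD_diff_bound (β t : ℝ) (hβ : 0 ≤ β) (ht : 0 ≤ t) (w u : ℝ) :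
    |PsiD β t (w + u) - PsiD β t w| ≤ |u| * t ^ 2 * Real.exp (t * |u|) * Psi β t w := by
  set m : ℝ → ℝ := fun v => if v ≤ β then v else 2 * β - v with hm
  have hPsiD : ∀ v, PsiD β t v = t * Real.exp (t * m v) := by
    intro v; simp only [PsiD, hm]; split_ifs <;> rfl
  have hmlip : |m (w + u) - m w| ≤ |u| := by
    simp only [hm]
    split_ifs with h1 h2 h2 <;>
    · rw [abs_le]
      rcases abs_cases u with ⟨h, h'⟩ | ⟨h, h'⟩ <;> constructor <;> linarith
  have hexp : Real.exp (t * m w) ≤ Psi β t w := by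
    simp only [Psi, hm]; split_ifs with h
    · linarith
    · have h1 : t * (2 * β - w) ≤ t * β := by nlinarith
      have h2 := Real.exp_le_exp.mpr h1
      linarith
  have hd : |t * m (w + u) - t * m w| ≤ t * |u| := by
    rw [← mul_sub, abs_mul, abs_of_nonneg ht]
    exact mul_le_mul_of_nonneg_left hmlip ht
  have hE : Real.exp |t * m (w + u) - t * m w| ≤ Real.exp (t * |u|) :=
    Real.exp_le_exp.mpr hd
  calc |PsiD β t (w + u) - PsiD β t w|
      = t * |Real.exp (t * m (w + u)) - Real.exp (t * m w)| := by
        rw [hPsiD, hPsiD, ← mul_sub, abs_mul, abs_of_nonneg ht]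
    _ ≤ t * (Real.exp (t * m w) *
          (|t * m (w + u) - t * m w| * Real.exp |t * m (w + u) - t * m w|)) :=
        mul_le_mul_of_nonneg_left (abs_exp_sub_exp_le _ _) ht
    _ ≤ t * (Real.exp (t * m w) * ((t * |u|) * Real.exp (t * |u|))) := by
        gcongr
    _ = |u| * t ^ 2 * Real.exp (t * |u|) * Real.exp (t * m w) := by ring
    _ ≤ |u| * t ^ 2 * Real.exp (t * |u|) * Psi β t w := by
        have : 0 ≤ |u| * t ^ 2 * Real.exp (t * |u|) := by positivity
        exact mul_le_mul_of_nonneg_left hexp this
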